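/- Suppose D ⊆ Ω_m^k with n nodes is a 'regular fraction' in the sense that for every monomial z^α with α ∈ ℤ_m^k, the evaluation vector [z^α(d)]_{d∈D} is either a scalar multiple of the all-ones vector 1_n or orthogonal to 1_n. Let ν be a Gaussian measure (∫ z^α dν = 0 for α ≠ 0, ∫1 dν = 1). Then for every monomial basis S containing 1 with invertible evaluation matrix X_{D,S}, the cubature weights w_S = (X_{D,S}ᵗ)⁻¹[∫ s dν]_{s∈S} are all equal to 1/n. -/

import Mathlib

open MeasureTheory Matrix

/-- The monomial `z^α = ∏ i, z i ^ α i` as a function on `ℂ^k`. -/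
noncomputable def mono {k : ℕ} (a : Fin k → ℕ) (z : Fin k → ℂ) : ℂ := ∏ i, z i ^ a i

/-!
The column of `X` indexed by the constant monomial is `1ₙ`. Any other column is not constant,
since it would then be parallel to `1ₙ` and `X` would be singular; so by regularity it sums to
zero, and its monomial is not `1`, so its `ν`-moment vanishes. Hence `Xᵀ (1ₙ / n) = e_{j0}`,
which is the moment vector, and inverting `Xᵀ` gives the weights.
-/

@[simp]
theorem mono_zero {k : ℕ} (z : Fin k → ℂ) : mono 0 z = 1 := by
  simp [mono]

namespace Matrix

variable {ι R K : Type*} [Fintype ι] [DecidableEq ι]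

theorem det_eq_zero_of_col_eq_smul_col [CommRing R] {A : Matrix ι ι R} {j j₀ : ι} (hj : j ≠ j₀)
    (c : R) (h : ∀ i, A i j = c * A i j₀) : A.det = 0 := by
  rw [← det_updateCol_add_smul_self A hj (-c)]
  exact det_eq_zero_of_column_eq_zero j fun i => by simp [h]

theorem not_exists_col_const_of_isUnit_det [CommRing R] [Nontrivial R] {A : Matrix ι ι R}
    (hA : IsUnit A.det) {j j₀ : ι} (hj : j ≠ j₀) (hone : ∀ i, A i j₀ = 1) :
    ¬ ∃ γ, ∀ i, A i j = γ := by
  rintro ⟨γ, hγ⟩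
  exact hA.ne_zero (det_eq_zero_of_col_eq_smul_col hj γ fun i => by simp [hγ, hone])

theorem transpose_mulVec_const_eq_single [Field K] [CharZero K] {A : Matrix ι ι K} {j₀ : ι}
    (hone : ∀ i, A i j₀ = 1) (hsum : ∀ j ≠ j₀, ∑ i, A i j = 0) :
    Aᵀ *ᵥ (fun _ => 1 / (Fintype.card ι : K)) = Pi.single j₀ 1 := by
  have : Nonempty ι := ⟨j₀⟩
  have hcard : (Fintype.card ι : K) ≠ 0 := Nat.cast_ne_zero.mpr Fintype.card_ne_zero
  funext j
  simp only [mulVec, dotProduct, transpose_apply, ← Finset.sum_mul]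
  by_cases hj : j = j₀
  · subst hj
    simp [hone, hcard]
  · simp [hsum j hj, hj]

end Matrix

theorem regular_fraction_equal_weights_general {k n : ℕ} (m : ℕ)
    (d : Fin n → (Fin k → ℂ))
    (hreg : ∀ a : Fin k → ℕ, (∀ l, a l < m) →
      (∃ γ : ℂ, ∀ i, mono a (d i) = γ) ∨ (∑ i, mono a (d i) = 0))
    (S : Fin n → (Fin k → ℕ)) (hSm : ∀ j l, S j l < m)
    (j0 : Fin n) (hj0 : S j0 = 0)
    (ν : Measure (Fin k → ℂ))
    (hν0 : ∀ α : Fin k → ℕ, α ≠ 0 → ∫ z, mono α z ∂ν = 0)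
    (hν1 : ∫ z, mono (0 : Fin k → ℕ) z ∂ν = 1)
    (X : Matrix (Fin n) (Fin n) ℂ)
    (hX : X = Matrix.of fun i j => mono (S j) (d i))
    (hinv : IsUnit X.det) :
    (X.transpose⁻¹ *ᵥ (fun j => ∫ z, mono (S j) z ∂ν)) = (fun _ => 1 / (n : ℂ)) := by
  have hXij : ∀ i j, X i j = mono (S j) (d i) := fun i j => by rw [hX]; rfl
  have hone : ∀ i, X i j0 = 1 := fun i => by rw [hXij, hj0, mono_zero]
  have hconst : ∀ j ≠ j0, ¬ ∃ γ, ∀ i, mono (S j) (d i) = γ := fun j hj => by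
    simpa only [hXij] using not_exists_col_const_of_isUnit_det hinv hj hone
  have hsum : ∀ j ≠ j0, ∑ i, X i j = 0 := fun j hj => by
    simpa only [hXij] using (hreg (S j) (hSm j)).resolve_left (hconst j hj)
  have hmoments : (fun j => ∫ z, mono (S j) z ∂ν) = Pi.single j0 1 := by
    funext j
    by_cases hj : j = j0
    · subst hj
      simpa [hj0] using hν1
    · rw [Pi.single_eq_of_ne hj]
      exact hν0 _ fun hS => hconst j hj ⟨1, fun i => by rw [hS, mono_zero]⟩
  let := invertibleOfIsUnitDet _ (isUnit_det_transpose X hinv)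
  rw [hmoments, inv_mulVec_eq_vec (transpose_mulVec_const_eq_single hone hsum).symm,
    Fintype.card_fin]

/-- if `D ⊆ Ω_m^k` is a regular fraction (every monomial evaluation
vector is either a multiple of the all-ones vector or orthogonal to it), then for a
Gaussian-type measure `ν` every correct monomial basis `S` containing `1` yields
equal weights `1/n`. -/
theorem regular_fraction_equal_weights {k n : ℕ} (m : ℕ) (hm : 0 < m) (hn : 0 < n)
    (d : Fin n → (Fin k → ℂ)) (hdinj : Function.Injective d)
    (hd : ∀ i l, d i l ^ m = 1)
    (hreg : ∀ a : Fin k → ℕ, (∀ l, a l < m) →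
      (∃ γ : ℂ, ∀ i, mono a (d i) = γ) ∨ (∑ i, mono a (d i) = 0))
    (S : Fin n → (Fin k → ℕ)) (hSm : ∀ j l, S j l < m)
    (j0 : Fin n) (hj0 : S j0 = 0)
    (ν : Measure (Fin k → ℂ))
    (hint : ∀ j, Integrable (fun z => mono (S j) z) ν)
    (hν0 : ∀ α : Fin k → ℕ, α ≠ 0 → ∫ z, mono α z ∂ν = 0)
    (hν1 : ∫ z, mono (0 : Fin k → ℕ) z ∂ν = 1)
    (X : Matrix (Fin n) (Fin n) ℂ)
    (hX : X = Matrix.of fun i j => mono (S j) (d i))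
    (hinv : IsUnit X.det) :
    (X.transpose⁻¹ *ᵥ (fun j => ∫ z, mono (S j) z ∂ν)) = (fun _ => 1 / (n : ℂ)) :=
  regular_fraction_equal_weights_general m d hreg S hSm j0 hj0 ν hν0 hν1 X hX hinv
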